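/- arXiv:1108.6228 — 2 statements merged into one kernel-verified Lean document; each statement's English description precedes it below -/
import Mathlib

section
/- Let N ≥ 1 be a natural number, ν ∈ (0,1), μ = 1 − ν, and α > 0. Define f(x,t) = e^{−αt} ∫₀¹ (1−u)^x (1 + (ν/μ)u)^{N−x} u^{α−1} du for integers 0 ≤ x ≤ N and t ∈ ℝ. Then for every integer 1 ≤ x ≤ N and every t ∈ ℝ, (∂/∂t) f(x,t) + μ·x·(f(x−1,t) − f(x,t)) + ν·(N−x)·(f(x+1,t) − f(x,t)) = 0. -/
/-! Write `p_k(u) = (1 - u)^k (1 + c u)^(N - k)` with `c = ν / μ`, so that `μ (1 + c) = 1` and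
`ν = μ c`. Both differences `p_(x-1) - p_x` and `p_(x+1) - p_x` carry the factor `(1 + c) u`,
which turns the generator into a derivative: `u p_x' = -(Q p)(x)`. Hence
`d/du (p_x u^α) = u^(α-1) (α p_x - (Q p)(x))`, and integrating over `(0, 1)`, where the boundary
terms vanish because `α > 0` and `x ≥ 1`, gives `α F(x) = (Q F)(x)` for
`F(k) = ∫₀¹ p_k(u) u^(α-1) du`. This is the harmonicity of `e^(-α t) F`. -/

open MeasureTheory Set

def ehrenfestGenerator (N : ℕ) (ν μ : ℝ) (g : ℕ → ℝ) (x : ℕ) : ℝ :=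
  μ * x * (g (x - 1) - g x) + ν * ((N : ℝ) - x) * (g (x + 1) - g x)

section Generator

variable {N : ℕ} {ν μ : ℝ}

lemma ehrenfestGenerator_const_mul (a : ℝ) (g : ℕ → ℝ) (x : ℕ) :
    ehrenfestGenerator N ν μ (fun k => a * g k) x = a * ehrenfestGenerator N ν μ g x := by
  unfold ehrenfestGenerator; ring

variable {s : Set ℝ} {g : ℕ → ℝ → ℝ}

lemma integrableOn_ehrenfestGenerator (hg : ∀ k, IntegrableOn (g k) s) (x : ℕ) :
    IntegrableOn (fun u => ehrenfestGenerator N ν μ (fun k => g k u) x) s :=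
  (((hg _).sub (hg _)).const_mul _).add (((hg _).sub (hg _)).const_mul _)

lemma integral_ehrenfestGenerator (hg : ∀ k, IntegrableOn (g k) s) (x : ℕ) :
    ∫ u in s, ehrenfestGenerator N ν μ (fun k => g k u) x
      = ehrenfestGenerator N ν μ (fun k => ∫ u in s, g k u) x := by
  have hdiff (i j : ℕ) : IntegrableOn (fun u => g i u - g j u) s := (hg i).sub (hg j)
  unfold ehrenfestGenerator
  rw [integral_add ((hdiff _ _).const_mul _) ((hdiff _ _).const_mul _),
    integral_const_mul, integral_const_mul, integral_sub (hg _) (hg _),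
    integral_sub (hg _) (hg _)]

end Generator

lemma integrableOn_mul_rpow_sub_one {g : ℝ → ℝ} (hg : ContinuousOn g (Icc 0 1))
    {α : ℝ} (hα : 0 < α) : IntegrableOn (fun u => g u * u ^ (α - 1)) (Ioo 0 1) := by
  have hrpow : IntegrableOn (fun u : ℝ => u ^ (α - 1)) (Icc 0 1) := by
    rw [integrableOn_Icc_iff_integrableOn_Ioc, ← intervalIntegrable_iff_integrableOn_Ioc_of_le
      zero_le_one]
    exact intervalIntegral.intervalIntegrable_rpow' (by linarith)
  exact (hrpow.continuousOn_mul hg isCompact_Icc).mono_set Ioo_subset_Icc_self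

def ehrenfestKernel (c : ℝ) (N k : ℕ) (u : ℝ) : ℝ := (1 - u) ^ k * (1 + c * u) ^ (N - k)

section Kernel

variable (c : ℝ) (N : ℕ)

lemma continuous_ehrenfestKernel (k : ℕ) : Continuous (ehrenfestKernel c N k) := by
  unfold ehrenfestKernel; fun_prop

lemma hasDerivAt_ehrenfestKernel (k : ℕ) (u : ℝ) :
    HasDerivAt (ehrenfestKernel c N k)
      (-(k * (1 - u) ^ (k - 1) * (1 + c * u) ^ (N - k))
        + c * ((N - k : ℕ) * (1 - u) ^ k * (1 + c * u) ^ (N - k - 1))) u := by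
  have h1 : HasDerivAt (fun u : ℝ => (1 - u) ^ k) (k * (1 - u) ^ (k - 1) * (-1)) u := by
    simpa using ((hasDerivAt_id u).const_sub 1).fun_pow k
  have h2 : HasDerivAt (fun u : ℝ => (1 + c * u) ^ (N - k))
      ((N - k : ℕ) * (1 + c * u) ^ (N - k - 1) * c) u := by
    simpa using (((hasDerivAt_id u).const_mul c).const_add 1).fun_pow (N - k)
  exact (h1.fun_mul h2).congr_deriv (by ring)

variable {N}

lemma natCast_mul_ehrenfestKernel_pred_sub {k : ℕ} (hk : k ≤ N) (u : ℝ) :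
    k * (ehrenfestKernel c N (k - 1) u - ehrenfestKernel c N k u)
      = (1 + c) * u * (k * (1 - u) ^ (k - 1) * (1 + c * u) ^ (N - k)) := by
  unfold ehrenfestKernel
  rcases k with _ | k
  · simp
  · rw [Nat.add_sub_cancel, show N - k = N - (k + 1) + 1 by omega]
    ring

lemma sub_natCast_mul_ehrenfestKernel_succ_sub {k : ℕ} (hk : k ≤ N) (u : ℝ) :
    ((N : ℝ) - k) * (ehrenfestKernel c N (k + 1) u - ehrenfestKernel c N k u)
      = -((1 + c) * u * ((N - k : ℕ) * (1 - u) ^ k * (1 + c * u) ^ (N - k - 1))) := by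
  unfold ehrenfestKernel
  rcases hk.eq_or_lt with rfl | hlt
  · simp
  · obtain ⟨m, hm⟩ : ∃ m, N - k = m + 1 := ⟨N - k - 1, by omega⟩
    rw [← Nat.cast_sub hk, hm, show N - (k + 1) = m by omega, Nat.add_sub_cancel]
    push_cast
    ring

variable {c} {ν μ α : ℝ}

lemma hasDerivAt_ehrenfestKernel_mul_rpow (hμc : μ * (1 + c) = 1) (hνc : ν = μ * c) {x : ℕ}
    (hx : x ≤ N) {u : ℝ} (hu : 0 < u) :
    HasDerivAt (fun u => ehrenfestKernel c N x u * u ^ α)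
      (α * (ehrenfestKernel c N x u * u ^ (α - 1))
        - ehrenfestGenerator N ν μ (fun k => ehrenfestKernel c N k u * u ^ (α - 1)) x) u := by
  have hrpow : HasDerivAt (fun u => u ^ α) (α * u ^ (α - 1)) u :=
    Real.hasDerivAt_rpow_const (Or.inl hu.ne')
  refine ((hasDerivAt_ehrenfestKernel c N x u).mul hrpow).congr_deriv ?_
  have hu_rpow : u ^ α = u * u ^ (α - 1) := by
    rw [Real.rpow_sub_one hu.ne', mul_div_cancel₀ _ hu.ne']
  have hpred := natCast_mul_ehrenfestKernel_pred_sub c hx u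
  have hsucc := sub_natCast_mul_ehrenfestKernel_succ_sub c hx u
  unfold ehrenfestGenerator
  rw [hu_rpow, hνc]
  linear_combination u ^ (α - 1) * (μ * hpred + μ * c * hsucc
    + (u * (x * (1 - u) ^ (x - 1) * (1 + c * u) ^ (N - x))
      - c * u * ((N - x : ℕ) * (1 - u) ^ x * (1 + c * u) ^ (N - x - 1))) * hμc)

theorem mul_integral_ehrenfestKernel_eq_generator (hμc : μ * (1 + c) = 1)
    (hνc : ν = μ * c) (hα : 0 < α) {x : ℕ} (hx₁ : 1 ≤ x) (hxN : x ≤ N) :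
    α * ∫ u in Ioo 0 1, ehrenfestKernel c N x u * u ^ (α - 1)
      = ehrenfestGenerator N ν μ
          (fun k => ∫ u in Ioo 0 1, ehrenfestKernel c N k u * u ^ (α - 1)) x := by
  have hint (k : ℕ) : IntegrableOn (fun u => ehrenfestKernel c N k u * u ^ (α - 1)) (Ioo 0 1) :=
    integrableOn_mul_rpow_sub_one (continuous_ehrenfestKernel c N k).continuousOn hα
  have hα_int := (hint x).const_mul α
  have hgen_int := integrableOn_ehrenfestGenerator (N := N) (ν := ν) (μ := μ) hint x
  have hftc := intervalIntegral.integral_eq_sub_of_hasDerivAt_of_le zero_le_one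
    ((continuous_ehrenfestKernel c N x).mul (Real.continuous_rpow_const hα.le)).continuousOn
    (fun u hu => hasDerivAt_ehrenfestKernel_mul_rpow hμc hνc hxN hu.1)
    ((intervalIntegrable_iff_integrableOn_Ioo_of_le zero_le_one).2 (hα_int.sub hgen_int))
  have hboundary :
      ehrenfestKernel c N x 1 * (1 : ℝ) ^ α - ehrenfestKernel c N x 0 * 0 ^ α = 0 := by
    simp [ehrenfestKernel, Real.zero_rpow hα.ne', zero_pow (by omega : x ≠ 0)]
  rw [Pi.mul_apply, Pi.mul_apply, hboundary, intervalIntegral.integral_of_le zero_le_one,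
    integral_Ioc_eq_integral_Ioo, integral_sub hα_int hgen_int, integral_const_mul,
    integral_ehrenfestGenerator hint] at hftc
  exact sub_eq_zero.1 hftc

end Kernel

theorem ehrenfest_Ialpha_harmonic_general
    (N : ℕ) (ν μ : ℝ) (hν : ν ∈ Set.Ioo (0:ℝ) 1) (hμ : μ = 1 - ν)
    (α : ℝ) (hα : 0 < α) (f : ℕ → ℝ → ℝ)
    (hf : ∀ (x : ℕ) (t : ℝ),
      f x t = Real.exp (-α * t) *
        ∫ u in Set.Ioo (0:ℝ) 1,
          (1 - u) ^ x * (1 + (ν / μ) * u) ^ (N - x) * u ^ (α - 1)) :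
    ∀ (x : ℕ), 1 ≤ x → x ≤ N → ∀ t : ℝ,
      deriv (f x) t
        + μ * x * (f (x - 1) t - f x t)
        + ν * ((N : ℝ) - x) * (f (x + 1) t - f x t) = 0 := by
  intro x hx₁ hxN t
  have hμ₀ : μ ≠ 0 := by rw [hμ]; linarith [hν.2]
  set F : ℕ → ℝ := fun k => ∫ u in Ioo 0 1, ehrenfestKernel (ν / μ) N k u * u ^ (α - 1)
  have hrec : α * F x = ehrenfestGenerator N ν μ F x :=
    mul_integral_ehrenfestKernel_eq_generator (by field_simp; linarith) (by field_simp) hα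
      hx₁ hxN
  have hfF : f = fun k t => Real.exp (-α * t) * F k := funext₂ hf
  have hderiv : HasDerivAt (f x) (-α * Real.exp (-α * t) * F x) t := by
    rw [hfF]
    exact ((((hasDerivAt_id t).const_mul (-α)).exp).mul_const (F x)).congr_deriv
      (by rw [id]; ring)
  rw [hderiv.deriv, add_assoc]
  change _ + ehrenfestGenerator N ν μ (fun k => f k t) x = 0
  rw [hfF, ehrenfestGenerator_const_mul, ← hrec]
  ring

/-- The function `f(x,t) = e^{-αt} ∫₀¹ (1-u)^x (1 + (ν/μ)u)^{N-x} u^{α-1} du` is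
space-time harmonic for the Ehrenfest generator away from the state `0`. -/
theorem ehrenfest_Ialpha_harmonic
    (N : ℕ) (hN : 1 ≤ N) (ν μ : ℝ) (hν : ν ∈ Set.Ioo (0:ℝ) 1) (hμ : μ = 1 - ν)
    (α : ℝ) (hα : 0 < α) (f : ℕ → ℝ → ℝ)
    (hf : ∀ (x : ℕ) (t : ℝ),
      f x t = Real.exp (-α * t) *
        ∫ u in Set.Ioo (0:ℝ) 1,
          (1 - u) ^ x * (1 + (ν / μ) * u) ^ (N - x) * u ^ (α - 1)) :
    ∀ (x : ℕ), 1 ≤ x → x ≤ N → ∀ t : ℝ,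
      deriv (f x) t
        + μ * x * (f (x - 1) t - f x t)
        + ν * ((N : ℝ) - x) * (f (x + 1) t - f x t) = 0 :=
  ehrenfest_Ialpha_harmonic_general N ν μ hν hμ α hα f hf
end

section
/- Let ν ∈ (0,1), μ = 1 − ν, α > 0, and set α_N = α·N·ν^N. Then lim_{N→∞} [∫₀¹ (1−u)^N u^{α_N−1} du] / [∫₀¹ (1 + (μ/ν)u)^N u^{α_N−1} du] = μ/(μ + α) = (1−ν)/(1−ν+α). -/
/-!
Put `e = α N ν ^ N`; then `e → 0` and `N e → 0`.

Numerator: Bernoulli's inequality `1 - N u ≤ (1 - u) ^ N ≤ 1` squeezes `e` times the integral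
between `1 - N e / (1 + e)` and `1`.

Denominator: with `c = μ / ν`, so that `1 + c = ν⁻¹`, the binomial expansion gives
`∑ₖ (N choose k) cᵏ / (k + e)`, whose `k = 0` term is `1 / e`. For `k ≥ 1`, replacing `k + e`
by `k + 1` changes the term by at most `3 (N choose k) cᵏ / ((k + 1) (k + 2))`; these add up to
`O((1 + c) ^ N / N²)` since `(N choose k) / ((k + 1) (k + 2))` equals
`(N + 2 choose k + 2) / ((N + 1) (N + 2))`. The sum with `k + 1` is
`((1 + c) ^ (N + 1) - 1) / ((N + 1) c) ~ ν⁻ᴺ / (N (1 - ν))`, so `e` times the denominator tends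
to `1 + α / (1 - ν)`.
-/

open Filter Topology MeasureTheory Set Finset

lemma integral_Ioo_zero_one_rpow {p : ℝ} (hp : -1 < p) :
    ∫ u in Ioo (0:ℝ) 1, u ^ p = 1 / (p + 1) := by
  rw [← integral_Ioc_eq_integral_Ioo, ← intervalIntegral.integral_of_le zero_le_one,
    integral_rpow (Or.inl hp), Real.one_rpow, Real.zero_rpow (by linarith), sub_zero]

lemma one_add_mul_pow_mul_rpow_eq_sum (c e : ℝ) {u : ℝ} (hu : 0 < u) (N : ℕ) :
    (1 + c * u) ^ N * u ^ (e - 1) =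
      ∑ k ∈ range (N + 1), (N.choose k : ℝ) * c ^ k * u ^ ((k : ℝ) + e - 1) := by
  rw [add_comm, add_pow, sum_mul]
  refine sum_congr rfl fun k _ => ?_
  rw [add_sub_assoc, Real.rpow_add hu, Real.rpow_natCast]
  ring

lemma integrableOn_Ioo_zero_one_rpow_natCast_add {e : ℝ} (he : 0 < e) (k : ℕ) :
    IntegrableOn (fun u : ℝ => u ^ ((k : ℝ) + e - 1)) (Ioo 0 1) :=
  (intervalIntegral.integrableOn_Ioo_rpow_iff zero_lt_one).2
    (by linarith [k.cast_nonneg (α := ℝ)])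

lemma integrableOn_one_add_mul_pow_mul_rpow (c : ℝ) {e : ℝ} (he : 0 < e) (N : ℕ) :
    IntegrableOn (fun u : ℝ => (1 + c * u) ^ N * u ^ (e - 1)) (Ioo 0 1) :=
  IntegrableOn.congr_fun (integrable_finsetSum _ fun k _ =>
    (integrableOn_Ioo_zero_one_rpow_natCast_add he k).const_mul _)
    (fun _ hu => (one_add_mul_pow_mul_rpow_eq_sum c e hu.1 N).symm) measurableSet_Ioo

lemma integral_one_add_mul_pow_mul_rpow (c : ℝ) {e : ℝ} (he : 0 < e) (N : ℕ) :
    ∫ u in Ioo (0:ℝ) 1, (1 + c * u) ^ N * u ^ (e - 1) =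
      ∑ k ∈ range (N + 1), (N.choose k : ℝ) * c ^ k / (k + e) := by
  rw [setIntegral_congr_fun measurableSet_Ioo
      fun u hu => one_add_mul_pow_mul_rpow_eq_sum c e hu.1 N,
    integral_finsetSum _ fun k _ => (integrableOn_Ioo_zero_one_rpow_natCast_add he k).const_mul _]
  refine sum_congr rfl fun k _ => ?_
  rw [integral_const_mul, integral_Ioo_zero_one_rpow (by linarith [k.cast_nonneg (α := ℝ)]),
    sub_add_cancel, mul_one_div]

lemma integrableOn_one_sub_pow_mul_rpow {e : ℝ} (he : 0 < e) (N : ℕ) :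
    IntegrableOn (fun u : ℝ => (1 - u) ^ N * u ^ (e - 1)) (Ioo 0 1) := by
  simpa [← sub_eq_add_neg] using integrableOn_one_add_mul_pow_mul_rpow (-1) he N

lemma integral_one_sub_pow_mul_rpow_le {e : ℝ} (he : 0 < e) (N : ℕ) :
    ∫ u in Ioo (0:ℝ) 1, (1 - u) ^ N * u ^ (e - 1) ≤ 1 / e := by
  calc ∫ u in Ioo (0:ℝ) 1, (1 - u) ^ N * u ^ (e - 1)
      ≤ ∫ u in Ioo (0:ℝ) 1, u ^ (e - 1) :=
        setIntegral_mono_on (integrableOn_one_sub_pow_mul_rpow he N)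
          ((intervalIntegral.integrableOn_Ioo_rpow_iff zero_lt_one).2 (by linarith))
          measurableSet_Ioo fun u hu => mul_le_of_le_one_left (Real.rpow_nonneg hu.1.le _)
            (pow_le_one₀ (by linarith [hu.2]) (by linarith [hu.1]))
    _ = 1 / e := by rw [integral_Ioo_zero_one_rpow (by linarith), sub_add_cancel]

lemma one_div_sub_le_integral_one_sub_pow_mul_rpow {e : ℝ} (he : 0 < e) (N : ℕ) :
    1 / e - N / (1 + e) ≤ ∫ u in Ioo (0:ℝ) 1, (1 - u) ^ N * u ^ (e - 1) := by
  calc 1 / e - N / (1 + e) = ∫ u in Ioo (0:ℝ) 1, (1 + (-N : ℝ) * u) ^ 1 * u ^ (e - 1) := by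
        rw [integral_one_add_mul_pow_mul_rpow _ he]
        simp only [sum_range_succ, range_zero, sum_empty, Nat.choose_zero_right, Nat.choose_self,
          Nat.cast_zero, Nat.cast_one, pow_zero, pow_one]
        ring
    _ ≤ ∫ u in Ioo (0:ℝ) 1, (1 - u) ^ N * u ^ (e - 1) :=
        setIntegral_mono_on (integrableOn_one_add_mul_pow_mul_rpow _ he 1)
          (integrableOn_one_sub_pow_mul_rpow he N) measurableSet_Ioo fun u hu =>
          mul_le_mul_of_nonneg_right (by
            simpa [sub_eq_add_neg] using one_add_mul_le_pow (a := -u) (by linarith [hu.2]) N)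
            (Real.rpow_nonneg hu.1.le _)

theorem tendsto_mul_integral_one_sub_pow_mul_rpow {e : ℕ → ℝ} (he : ∀ᶠ N in atTop, 0 < e N)
    (hNe : Tendsto (fun N : ℕ => N * e N) atTop (𝓝 0)) :
    Tendsto (fun N : ℕ => e N * ∫ u in Ioo (0:ℝ) 1, (1 - u) ^ N * u ^ (e N - 1))
      atTop (𝓝 1) := by
  refine tendsto_of_tendsto_of_tendsto_of_le_of_le' (by simpa using hNe.const_sub 1)
    tendsto_const_nhds ?_ ?_
  · filter_upwards [he] with N hN
    calc 1 - N * e N ≤ e N * (1 / e N - N / (1 + e N)) := by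
          rw [mul_sub, mul_one_div_cancel hN.ne', mul_comm, mul_div_assoc']
          exact sub_le_sub_left (div_le_self (by positivity) (by linarith)) 1
      _ ≤ _ :=
          mul_le_mul_of_nonneg_left (one_div_sub_le_integral_one_sub_pow_mul_rpow hN N) hN.le
  · filter_upwards [he] with N hN
    calc _ ≤ e N * (1 / e N) :=
          mul_le_mul_of_nonneg_left (integral_one_sub_pow_mul_rpow_le hN N) hN.le
      _ = 1 := mul_one_div_cancel hN.ne'

lemma natCast_add_one_mul_sum_choose_mul_pow_div (c : ℝ) (N : ℕ) :
    (N + 1) * c * ∑ k ∈ range (N + 1), (N.choose k : ℝ) * c ^ k / (k + 1) =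
      (1 + c) ^ (N + 1) - 1 := by
  have hterm (k : ℕ) : (N + 1) * c * ((N.choose k : ℝ) * c ^ k / (k + 1)) =
      (N + 1).choose (k + 1) * c ^ (k + 1) := by
    have h : ((N : ℝ) + 1) * N.choose k = (N + 1).choose (k + 1) * ((k : ℝ) + 1) := by
      exact_mod_cast Nat.add_one_mul_choose_eq N k
    field_simp
    linear_combination c ^ (k + 1) * h
  have hpow : (1 + c) ^ (N + 1) =
      ∑ k ∈ range (N + 1), ((N + 1).choose (k + 1) : ℝ) * c ^ (k + 1) + 1 := by
    rw [add_comm 1 c, add_pow, sum_range_succ']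
    simp [mul_comm]
  rw [mul_sum, sum_congr rfl fun k _ => hterm k, hpow, add_sub_cancel_right]

lemma sum_choose_mul_pow_div_mul_le {c : ℝ} (hc : 0 ≤ c) (N : ℕ) :
    (N + 1) * (N + 2) * c ^ 2 *
        ∑ k ∈ range (N + 1), (N.choose k : ℝ) * c ^ k / ((k + 1) * (k + 2)) ≤
      (1 + c) ^ (N + 2) := by
  have hterm (k : ℕ) :
      (N + 1) * (N + 2) * c ^ 2 * ((N.choose k : ℝ) * c ^ k / ((k + 1) * (k + 2))) =
        (N + 2).choose (k + 2) * c ^ (k + 2) := by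
    have h₁ : ((N : ℝ) + 1) * N.choose k = (N + 1).choose (k + 1) * ((k : ℝ) + 1) := by
      exact_mod_cast Nat.add_one_mul_choose_eq N k
    have h₂ : ((N : ℝ) + 2) * (N + 1).choose (k + 1) =
        (N + 2).choose (k + 2) * ((k : ℝ) + 2) := by
      exact_mod_cast Nat.add_one_mul_choose_eq (N + 1) (k + 1)
    field_simp
    linear_combination c ^ (k + 2) * ((N + 2) * h₁ + ((k : ℝ) + 1) * h₂)
  have hpow : (1 + c) ^ (N + 2) =
      ∑ k ∈ range (N + 1), ((N + 2).choose (k + 2) : ℝ) * c ^ (k + 2) + (N + 2) * c + 1 := by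
    rw [add_comm 1 c, add_pow, sum_range_succ', sum_range_succ']
    simp [mul_comm]
  rw [mul_sum, sum_congr rfl fun k _ => hterm k, hpow]
  have : 0 ≤ ((N : ℝ) + 2) * c := by positivity
  linarith

lemma div_add_le_div_add_one_add {a x e : ℝ} (ha : 0 ≤ a) (hx : 1 ≤ x) (he : 0 < e) :
    a / (x + e) ≤ a / (x + 1) + 3 * (a / ((x + 1) * (x + 2))) :=
  calc a / (x + e) ≤ a / x := div_le_div_of_nonneg_left ha (by positivity) (by linarith)
    _ ≤ a / (x + 1) + 3 * (a / ((x + 1) * (x + 2))) := by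
      rw [mul_div_assoc', div_add_div _ _ (by positivity) (by positivity),
        div_le_div_iff₀ (by positivity) (by positivity)]
      nlinarith [mul_nonneg (mul_nonneg ha (sub_nonneg.2 hx)) (by linarith : (0:ℝ) ≤ x + 1)]

lemma sum_sub_le_sum_div_add_sub {a : ℕ → ℝ} (ha : ∀ k, 0 ≤ a k) {e : ℝ} (he : 0 < e)
    (he1 : e ≤ 1) (N : ℕ) :
    ∑ k ∈ range (N + 1), a k / (k + 1) - a 0 ≤
      ∑ k ∈ range (N + 1), a k / (k + e) - a 0 / e := by
  simp only [sum_range_succ', Nat.cast_zero, zero_add, div_one, add_sub_cancel_right]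
  exact sum_le_sum fun k _ => div_le_div_of_nonneg_left (ha _) (by positivity) (by linarith)

lemma sum_div_add_sub_le {a : ℕ → ℝ} (ha : ∀ k, 0 ≤ a k) {e : ℝ} (he : 0 < e) (N : ℕ) :
    ∑ k ∈ range (N + 1), a k / (k + e) - a 0 / e ≤
      ∑ k ∈ range (N + 1), a k / (k + 1) +
        3 * ∑ k ∈ range (N + 1), a k / ((k + 1) * (k + 2)) := by
  have hterms := sum_le_sum fun k (_ : k ∈ range N) =>
    div_add_le_div_add_one_add (ha (k + 1)) (x := (k + 1 : ℕ)) (by simp) he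
  rw [sum_add_distrib, ← mul_sum] at hterms
  simp only [sum_range_succ' _ N, Nat.cast_zero, zero_add, add_sub_cancel_right]
  have := ha 0
  have : 0 ≤ a 0 / (1 * 2) := by positivity
  linarith

lemma one_add_one_sub_div_self {ν : ℝ} (hν : ν ≠ 0) : 1 + (1 - ν) / ν = ν⁻¹ := by
  field_simp
  ring

lemma tendsto_mul_pow_mul_sum_choose_mul_pow_div {ν : ℝ} (hν : ν ∈ Ioo (0:ℝ) 1) :
    Tendsto (fun N : ℕ => N * ν ^ N *
        ∑ k ∈ range (N + 1), (N.choose k : ℝ) * ((1 - ν) / ν) ^ k / (k + 1))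
      atTop (𝓝 (1 / (1 - ν))) := by
  obtain ⟨hν0, hν1⟩ := hν
  have hclosed (N : ℕ) : N * ν ^ N *
      ∑ k ∈ range (N + 1), (N.choose k : ℝ) * ((1 - ν) / ν) ^ k / (k + 1) =
        N / (N + 1) * ((1 - ν ^ (N + 1)) / (1 - ν)) := by
    set P := ∑ k ∈ range (N + 1), (N.choose k : ℝ) * ((1 - ν) / ν) ^ k / (k + 1)
    have key : ((N:ℝ) + 1) * (1 - ν) * (ν ^ N * P) = 1 - ν ^ (N + 1) :=
      calc ((N:ℝ) + 1) * (1 - ν) * (ν ^ N * P)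
          = ν ^ (N + 1) * ((N + 1) * ((1 - ν) / ν) * P) := by field_simp; ring
        _ = ν ^ (N + 1) * ((1 + (1 - ν) / ν) ^ (N + 1) - 1) := by
            rw [natCast_add_one_mul_sum_choose_mul_pow_div]
        _ = 1 - ν ^ (N + 1) := by
            rw [one_add_one_sub_div_self hν0.ne', mul_sub, ← mul_pow, mul_inv_cancel₀ hν0.ne',
              one_pow, mul_one]
    rw [← key]
    field_simp
  simp_rw [hclosed]
  simpa using (tendsto_natCast_div_add_atTop (𝕜 := ℝ) 1).mul
    ((((tendsto_pow_atTop_nhds_zero_of_lt_one hν0.le hν1).comp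
      (tendsto_add_atTop_nat 1)).const_sub 1).div_const (1 - ν))

lemma mul_pow_mul_sum_choose_mul_pow_div_le {ν : ℝ} (hν : ν ∈ Ioo (0:ℝ) 1) (N : ℕ) :
    N * ν ^ N * ∑ k ∈ range (N + 1), (N.choose k : ℝ) * ((1 - ν) / ν) ^ k / ((k + 1) * (k + 2)) ≤
      1 / (1 - ν) ^ 2 * (1 / (N + 1)) := by
  obtain ⟨hν0, hν1⟩ := hν
  have h1ν : 0 < 1 - ν := by linarith
  set R := ∑ k ∈ range (N + 1), (N.choose k : ℝ) * ((1 - ν) / ν) ^ k / ((k + 1) * (k + 2))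
  have hR : 0 ≤ ((N:ℝ) + 1) * (1 - ν) ^ 2 * (ν ^ N * R) := by
    have : 0 ≤ R := sum_nonneg fun k _ => by positivity
    positivity
  have key : ((N:ℝ) + 1) * (N + 2) * (1 - ν) ^ 2 * (ν ^ N * R) ≤ 1 :=
    calc ((N:ℝ) + 1) * (N + 2) * (1 - ν) ^ 2 * (ν ^ N * R)
        = ν ^ (N + 2) * ((N + 1) * (N + 2) * ((1 - ν) / ν) ^ 2 * R) := by field_simp; ring
      _ ≤ ν ^ (N + 2) * (1 + (1 - ν) / ν) ^ (N + 2) :=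
          mul_le_mul_of_nonneg_left (sum_choose_mul_pow_div_mul_le (by positivity) N)
            (by positivity)
      _ = 1 := by
          rw [one_add_one_sub_div_self hν0.ne', ← mul_pow, mul_inv_cancel₀ hν0.ne', one_pow]
  rw [div_mul_div_comm, one_mul, le_div_iff₀ (by positivity)]
  linarith

theorem tendsto_mul_pow_mul_integral_sub_one_div {ν : ℝ} (hν : ν ∈ Ioo (0:ℝ) 1) {e : ℕ → ℝ}
    (he : ∀ᶠ N in atTop, e N ∈ Set.Ioc 0 1) :
    Tendsto (fun N : ℕ => N * ν ^ N *
        ((∫ u in Ioo (0:ℝ) 1, (1 + (1 - ν) / ν * u) ^ N * u ^ (e N - 1)) - 1 / e N))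
      atTop (𝓝 (1 / (1 - ν))) := by
  have hP := tendsto_mul_pow_mul_sum_choose_mul_pow_div hν
  have hlower := hP.sub (tendsto_self_mul_const_pow_of_lt_one hν.1.le hν.2)
  have hupper := hP.add
    ((tendsto_one_div_add_atTop_nhds_zero_nat.const_mul (1 / (1 - ν) ^ 2)).const_mul 3)
  rw [sub_zero] at hlower
  rw [mul_zero, mul_zero, add_zero] at hupper
  have ha (N k : ℕ) : 0 ≤ (N.choose k : ℝ) * ((1 - ν) / ν) ^ k := by
    have := hν.1; have := hν.2; positivity
  refine tendsto_of_tendsto_of_tendsto_of_le_of_le' hlower hupper ?_ ?_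
  · filter_upwards [he] with N ⟨he0, he1⟩
    have := sum_sub_le_sum_div_add_sub (ha N) he0 he1 N
    simp only [Nat.choose_zero_right, pow_zero, Nat.cast_one, mul_one] at this
    rw [integral_one_add_mul_pow_mul_rpow _ he0, ← mul_sub_one]
    exact mul_le_mul_of_nonneg_left this (by have := hν.1; positivity)
  · filter_upwards [he] with N ⟨he0, _⟩
    have := sum_div_add_sub_le (ha N) he0 N
    simp only [Nat.choose_zero_right, pow_zero, Nat.cast_one, mul_one] at this
    rw [integral_one_add_mul_pow_mul_rpow _ he0]
    linarith [mul_pow_mul_sum_choose_mul_pow_div_le hν N,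
      mul_le_mul_of_nonneg_left this (by have := hν.1; positivity : (0:ℝ) ≤ N * ν ^ N)]

/-- Sub-critical regime (Proposition 7): convergence of the Laplace transform
`E_0(e^{-α_N T_N})` with `α_N = α N ν^N` to `(1-ν)/(1-ν+α)`. -/
theorem hitting_time_full_state_laplace_limit
    (ν μ α : ℝ) (hν : ν ∈ Set.Ioo (0:ℝ) 1) (hμ : μ = 1 - ν) (hα : 0 < α) :
    Tendsto (fun N : ℕ =>
        (∫ u in Set.Ioo (0:ℝ) 1, (1 - u) ^ N * u ^ (α * N * ν ^ N - 1)) /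
        (∫ u in Set.Ioo (0:ℝ) 1, (1 + (μ / ν) * u) ^ N * u ^ (α * N * ν ^ N - 1)))
      atTop (𝓝 ((1 - ν) / (1 - ν + α))) := by
  subst hμ
  have h1ν : 0 < 1 - ν := sub_pos.2 hν.2
  have he_pos : ∀ᶠ N : ℕ in atTop, 0 < α * N * ν ^ N := by
    filter_upwards [eventually_ge_atTop 1] with N hN
    have := hν.1
    positivity
  have he_lim : Tendsto (fun N : ℕ => α * N * ν ^ N) atTop (𝓝 0) := by
    simpa [mul_assoc] using (tendsto_self_mul_const_pow_of_lt_one hν.1.le hν.2).const_mul α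
  have hNe : Tendsto (fun N : ℕ => N * (α * N * ν ^ N)) atTop (𝓝 0) := by
    simpa [mul_assoc, mul_left_comm, sq] using
      (tendsto_pow_const_mul_const_pow_of_lt_one 2 hν.1.le hν.2).const_mul α
  have hnum := tendsto_mul_integral_one_sub_pow_mul_rpow he_pos hNe
  have hden := (tendsto_mul_pow_mul_integral_sub_one_div hν
    (he_pos.and (he_lim.eventually (eventually_le_nhds zero_lt_one)))).const_mul α
  have hlim := hnum.div ((tendsto_const_nhds (x := (1:ℝ))).add hden) (by positivity)
  rw [show (1 - ν) / (1 - ν + α) = 1 / (1 + α * (1 / (1 - ν))) by field_simp]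
  -- `A / D = e A / (e D)` and `e D = 1 + α (N ν ^ N (D - 1 / e))`
  refine hlim.congr' ?_
  filter_upwards [he_pos] with N hN
  rw [Pi.div_apply]
  generalize (∫ u in Ioo (0:ℝ) 1, (1 - u) ^ N * u ^ (α * N * ν ^ N - 1)) = A
  generalize (∫ u in Ioo (0:ℝ) 1, (1 + (1 - ν) / ν * u) ^ N * u ^ (α * N * ν ^ N - 1)) = D
  rw [← mul_div_mul_left A D hN.ne']
  congr 1
  linear_combination (-1 : ℝ) * mul_one_div_cancel hN.ne'
end
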